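/- arXiv:2306.02826 — 2 statements merged into one kernel-verified Lean document; each statement's English description precedes it below -/
import Mathlib

section
/- Let C_i be a cluster with average cost Δ = cost_τ(C_i,A)/|C_i| and let R_I(C_i) = {x ∈ C_i : cost_τ(x,A) ≤ (ε/(4z))^z · Δ} be the inner ring. Then for any solution S with |S| ≤ m, any 0 < ε < 1/2, and any z ≥ 1: |cost(R_I(C_i),S) − |R_I(C_i)|·cost(a_i,S)| ≤ ε·cost(R_I(C_i),S) + 2ε·cost_τ(C_i,A), where a_i is the center of C_i. -/
/-!
With `f = dist(·, S)`, which is 1-Lipschitz, convexity of `t ↦ t ^ z` gives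
`(u + d) ^ z ≤ p ^ (z - 1) * u ^ z + q ^ (z - 1) * d ^ z` whenever `p⁻¹ + q⁻¹ = 1`. Taking
`p = 1 + ε / (2z)`, so that `p ^ (z - 1) ≤ exp (ε / 2) ≤ 1 + ε`, yields the pointwise bound
`|f x ^ z - f a ^ z| ≤ ε * f x ^ z + (1 + 2z / ε) ^ (z - 1) * dist x a ^ z`.
On the inner ring every `dist x a ^ z` is at most `(ε / 4z) ^ z` times the average cost, and
`(1 + 2z / ε) ^ (z - 1) * (ε / 4z) ^ z ≤ ε / (4z)` because `1 + 2z / ε ≤ 4z / ε`.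
-/

open Finset

lemma add_pow_le_of_inv_add_inv_eq_one {p q : ℝ} (hp : 0 < p) (hq : 0 < q) (hpq : p⁻¹ + q⁻¹ = 1)
    {u d : ℝ} (hu : 0 ≤ u) (hd : 0 ≤ d) {z : ℕ} (hz : 1 ≤ z) :
    (u + d) ^ z ≤ p ^ (z - 1) * u ^ z + q ^ (z - 1) * d ^ z := by
  obtain ⟨n, rfl⟩ := Nat.exists_eq_add_of_le' hz
  have hconv := (convexOn_pow (𝕜 := ℝ) (n + 1)).2 (Set.mem_Ici.2 (mul_nonneg hp.le hu))
    (Set.mem_Ici.2 (mul_nonneg hq.le hd)) (inv_nonneg.2 hp.le) (inv_nonneg.2 hq.le) hpq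
  have rescale : ∀ r x : ℝ, r ≠ 0 → r⁻¹ * (r * x) ^ (n + 1) = r ^ n * x ^ (n + 1) := by
    intro r x hr
    rw [mul_pow, pow_succ]
    field_simp
  simpa only [smul_eq_mul, inv_mul_cancel_left₀ hp.ne', inv_mul_cancel_left₀ hq.ne',
    rescale p u hp.ne', rescale q d hq.ne', Nat.add_sub_cancel] using hconv

lemma one_add_div_pow_le {ε : ℝ} (hε : 0 ≤ ε) (hε1 : ε ≤ 1) {z : ℕ} (hz : 1 ≤ z) :
    (1 + ε / (2 * z)) ^ (z - 1) ≤ 1 + ε := by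
  have hz' : (0 : ℝ) < z := by exact_mod_cast hz
  calc (1 + ε / (2 * z)) ^ (z - 1) ≤ Real.exp (ε / (2 * z)) ^ (z - 1) := by
        gcongr
        linarith [Real.add_one_le_exp (ε / (2 * z))]
    _ = Real.exp ((z - 1 : ℕ) * (ε / (2 * z))) := (Real.exp_nat_mul _ _).symm
    _ ≤ Real.exp (ε / 2) := by
        gcongr
        rw [Nat.cast_sub hz, mul_div_assoc', div_le_div_iff₀ (by positivity) (by positivity)]
        push_cast
        nlinarith
    _ ≤ 1 / (1 - ε / 2) := Real.exp_bound_div_one_sub_of_interval (by positivity) (by linarith)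
    _ ≤ 1 + ε := by
        rw [div_le_iff₀ (by linarith)]
        nlinarith

lemma pow_sub_pow_le_of_le_add {u v d ε : ℝ} (hu : 0 ≤ u) (hv : 0 ≤ v) (hd : 0 ≤ d)
    (hvu : v ≤ u + d) (hε : 0 < ε) (hε1 : ε ≤ 1) {z : ℕ} (hz : 1 ≤ z) :
    v ^ z - u ^ z ≤ ε * u ^ z + (1 + 2 * z / ε) ^ (z - 1) * d ^ z := by
  have hz' : (0 : ℝ) < z := by exact_mod_cast hz
  have hconj : (1 + ε / (2 * z))⁻¹ + (1 + 2 * z / ε)⁻¹ = 1 := by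
    field_simp
    ring
  have := add_pow_le_of_inv_add_inv_eq_one (by positivity) (by positivity) hconj hu hd hz
  have := one_add_div_pow_le hε.le hε1 hz
  have : v ^ z ≤ (u + d) ^ z := by gcongr
  nlinarith [pow_nonneg hu z]

lemma abs_pow_sub_pow_le_of_abs_sub_le {b c d ε : ℝ} (hb : 0 ≤ b) (hc : 0 ≤ c) (hbc : |c - b| ≤ d)
    (hε : 0 < ε) (hε1 : ε ≤ 1) {z : ℕ} (hz : 1 ≤ z) :
    |c ^ z - b ^ z| ≤ ε * c ^ z + (1 + 2 * z / ε) ^ (z - 1) * d ^ z := by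
  have hd : 0 ≤ d := (abs_nonneg _).trans hbc
  have hK : 0 ≤ (1 + 2 * z / ε) ^ (z - 1) * d ^ z := by positivity
  obtain ⟨hcb, hbc⟩ := abs_sub_le_iff.1 hbc
  rcases le_total b c with hle | hle
  · have := pow_sub_pow_le_of_le_add hb hc hd (by linarith) hε hε1 hz
    have : b ^ z ≤ c ^ z := by gcongr
    rw [abs_of_nonneg (by linarith)]
    nlinarith
  · have := pow_sub_pow_le_of_le_add hc hb hd (by linarith) hε hε1 hz
    have : c ^ z ≤ b ^ z := by gcongr
    rw [abs_of_nonpos (by linarith)]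
    linarith

lemma abs_inf'_dist_sub_inf'_dist_le {X : Type*} [PseudoMetricSpace X] (S : Finset X)
    (hS : S.Nonempty) (x y : X) :
    |S.inf' hS (dist x) - S.inf' hS (dist y)| ≤ dist x y := by
  have key : ∀ x y : X, S.inf' hS (dist x) - dist x y ≤ S.inf' hS (dist y) := fun x y =>
    le_inf' hS _ fun s hs => by linarith [inf'_le (dist x) hs, dist_triangle x y s]
  rw [abs_sub_le_iff]
  constructor
  · linarith [key x y]
  · linarith [key y x, dist_comm x y]

lemma sum_le_mul_sum_of_le_mul_average {ι : Type*} {R C : Finset ι} {g : ι → ℝ} {t : ℝ}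
    (hRC : R ⊆ C) (ht : 0 ≤ t) (hg : ∀ x ∈ C, 0 ≤ g x)
    (h : ∀ x ∈ R, g x ≤ t * ((∑ y ∈ C, g y) / #C)) :
    ∑ x ∈ R, g x ≤ t * ∑ y ∈ C, g y := by
  have havg : 0 ≤ t * ((∑ y ∈ C, g y) / #C) := by
    have := sum_nonneg hg
    positivity
  calc ∑ x ∈ R, g x ≤ #R * (t * ((∑ y ∈ C, g y) / #C)) := by
        simpa only [nsmul_eq_mul] using sum_le_card_nsmul R g _ h
    _ ≤ #C * (t * ((∑ y ∈ C, g y) / #C)) := by gcongr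
    _ = t * ∑ y ∈ C, g y := by
        rw [mul_left_comm, ← mul_div_assoc,
          mul_div_cancel_left_of_imp fun hC => by simp [card_eq_zero.1 (by exact_mod_cast hC)]]

lemma pow_mul_pow_le_self {ε : ℝ} (hε : 0 < ε) {z : ℕ} (hz : 1 ≤ z) (hεz : ε ≤ 2 * z) :
    (1 + 2 * z / ε) ^ (z - 1) * (ε / (4 * z)) ^ z ≤ ε := by
  have hz' : (1 : ℝ) ≤ z := by exact_mod_cast hz
  calc (1 + 2 * z / ε) ^ (z - 1) * (ε / (4 * z)) ^ z
      ≤ (4 * z / ε) ^ (z - 1) * (ε / (4 * z)) ^ (z - 1 + 1) := by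
        rw [Nat.sub_add_cancel hz]
        gcongr
        rw [le_div_iff₀ hε, add_mul, div_mul_cancel₀ _ hε.ne']
        linarith
    _ = ε / (4 * z) := by
        rw [pow_succ, ← mul_assoc, ← mul_pow, div_mul_div_cancel₀', div_self, one_pow, one_mul]
        all_goals positivity
    _ ≤ ε := div_le_self hε.le (by linarith)

open scoped Classical in
theorem stmt10_general {X : Type*} [MetricSpace X] (C S : Finset X) (hS : S.Nonempty)
    (a : X) (z : ℕ) (hz : 1 ≤ z)
    (ε : ℝ) (hε : 0 < ε) (hε2 : ε < 1/2)
    (R : Finset X)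
    (hR : R = C.filter fun x =>
      dist x a ^ z ≤ (ε / (4 * (z : ℝ))) ^ z * ((∑ y ∈ C, dist y a ^ z) / C.card)) :
    |∑ x ∈ R, S.inf' hS (dist x) ^ z - (R.card : ℝ) * S.inf' hS (dist a) ^ z| ≤
      ε * ∑ x ∈ R, S.inf' hS (dist x) ^ z + 2 * ε * ∑ x ∈ C, dist x a ^ z := by
  set f : X → ℝ := fun x => S.inf' hS (dist x)
  set K : ℝ := (1 + 2 * z / ε) ^ (z - 1)
  have hf : ∀ x, 0 ≤ f x := fun x => le_inf' hS _ fun _ _ => dist_nonneg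
  have hpoint : ∀ x, |f x ^ z - f a ^ z| ≤ ε * f x ^ z + K * dist x a ^ z := fun x =>
    abs_pow_sub_pow_le_of_abs_sub_le (hf a) (hf x) (abs_inf'_dist_sub_inf'_dist_le S hS x a)
      hε (by linarith) hz
  have hring : ∑ x ∈ R, dist x a ^ z ≤ (ε / (4 * z)) ^ z * ∑ x ∈ C, dist x a ^ z := by
    subst hR
    exact sum_le_mul_sum_of_le_mul_average (filter_subset _ _) (by positivity)
      (fun _ _ => by positivity) fun x hx => (mem_filter.1 hx).2
  have hconst : K * (ε / (4 * z)) ^ z ≤ ε :=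
    pow_mul_pow_le_self hε hz (by linarith [(Nat.one_le_cast (α := ℝ)).2 hz])
  have hCnonneg : 0 ≤ ∑ x ∈ C, dist x a ^ z := sum_nonneg fun _ _ => by positivity
  calc |∑ x ∈ R, f x ^ z - #R * f a ^ z| = |∑ x ∈ R, (f x ^ z - f a ^ z)| := by
        rw [sum_sub_distrib, sum_const, nsmul_eq_mul]
    _ ≤ ∑ x ∈ R, (ε * f x ^ z + K * dist x a ^ z) :=
        (abs_sum_le_sum_abs _ _).trans (sum_le_sum fun x _ => hpoint x)
    _ = ε * ∑ x ∈ R, f x ^ z + K * ∑ x ∈ R, dist x a ^ z := by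
        rw [sum_add_distrib, mul_sum, mul_sum]
    _ ≤ ε * ∑ x ∈ R, f x ^ z + K * ((ε / (4 * z)) ^ z * ∑ x ∈ C, dist x a ^ z) := by
        gcongr
    _ ≤ ε * ∑ x ∈ R, f x ^ z + 2 * ε * ∑ x ∈ C, dist x a ^ z := by
        rw [← mul_assoc]
        nlinarith

open scoped Classical in
theorem stmt10 {X : Type*} [MetricSpace X] (C S : Finset X) (hS : S.Nonempty)
    (hC : C.Nonempty) (a : X) (m z : ℕ) (hm : S.card ≤ m) (hz : 1 ≤ z)
    (ε : ℝ) (hε : 0 < ε) (hε2 : ε < 1/2)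
    (R : Finset X)
    (hR : R = C.filter fun x =>
      dist x a ^ z ≤ (ε / (4 * (z : ℝ))) ^ z * ((∑ y ∈ C, dist y a ^ z) / C.card))
    (hRcard : (1 - ε) * C.card ≤ R.card) :
    |∑ x ∈ R, S.inf' hS (dist x) ^ z - (R.card : ℝ) * S.inf' hS (dist a) ^ z| ≤
      ε * ∑ x ∈ R, S.inf' hS (dist x) ^ z + 2 * ε * ∑ x ∈ C, dist x a ^ z :=
  stmt10_general C S hS a z hz ε hε hε2 R hR
end

section
/- For z > 1 and 0 ≤ a ≤ n, the function f(x) = a·|x|^z + (n−a)·|1−x|^z on ℝ attains its minimum value min_x f(x) = a(n−a) / ((n−a)^{1/(z−1)} + a^{1/(z−1)})^{z−1}. -/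
/-!
Each term `w * u ^ z` is convex in `u ≥ 0`, so it lies above its tangent line. At a point
`t ∈ (0, 1)` where the two weighted slopes `a * t ^ (z - 1)` and `b * (1 - t) ^ (z - 1)` agree,
the two tangent lines add up to a function of `|x| + |1 - x| ≥ 1` that is increasing, so `t` is a
global minimiser. Solving the balance equation gives `t = b^{1/(z-1)} / (b^{1/(z-1)} + a^{1/(z-1)})`.
-/

open Real

lemma rpow_add_mul_rpow_sub_one_mul_sub_le {t u z : ℝ} (ht : 0 < t) (hu : 0 ≤ u) (hz : 1 ≤ z) :
    t ^ z + z * t ^ (z - 1) * (u - t) ≤ u ^ z := by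
  have hbernoulli : 1 + z * (u / t - 1) ≤ (u / t) ^ z := by
    have := one_add_mul_self_le_rpow_one_add (s := u / t - 1) (by linarith [div_nonneg hu ht.le]) hz
    rwa [add_sub_cancel] at this
  rw [div_rpow hu ht.le] at hbernoulli
  calc t ^ z + z * t ^ (z - 1) * (u - t) = t ^ z * (1 + z * (u / t - 1)) := by
        rw [rpow_sub ht, rpow_one]; field_simp
    _ ≤ t ^ z * (u ^ z / t ^ z) := by gcongr
    _ = u ^ z := by field_simp

lemma mul_rpow_add_mul_rpow_eq_of_balanced {a b t s z : ℝ} (ht : 0 < t) (hs : 0 < s)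
    (hts : t + s = 1) (hbal : a * t ^ (z - 1) = b * s ^ (z - 1)) :
    a * t ^ z + b * s ^ z = a * t ^ (z - 1) := by
  calc a * t ^ z + b * s ^ z = a * t ^ (z - 1) * t + b * s ^ (z - 1) * s := by
        rw [mul_assoc, mul_assoc, ← rpow_add_one ht.ne', ← rpow_add_one hs.ne']; ring_nf
    _ = a * t ^ (z - 1) := by rw [← hbal, ← mul_add, hts, mul_one]

lemma mul_rpow_add_mul_rpow_le_of_balanced {a b t s u v z : ℝ} (ha : 0 ≤ a) (hb : 0 ≤ b)
    (ht : 0 < t) (hs : 0 < s) (hts : t + s = 1) (hz : 1 ≤ z)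
    (hbal : a * t ^ (z - 1) = b * s ^ (z - 1)) (hu : 0 ≤ u) (hv : 0 ≤ v) (huv : 1 ≤ u + v) :
    a * t ^ z + b * s ^ z ≤ a * u ^ z + b * v ^ z := by
  set M := a * t ^ (z - 1)
  have htangent_u : a * t ^ z + z * M * (u - t) ≤ a * u ^ z := by
    have := mul_le_mul_of_nonneg_left (rpow_add_mul_rpow_sub_one_mul_sub_le ht hu hz) ha
    linarith
  have htangent_v : b * s ^ z + z * M * (v - s) ≤ b * v ^ z := by
    have := mul_le_mul_of_nonneg_left (rpow_add_mul_rpow_sub_one_mul_sub_le hs hv hz) hb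
    rw [hbal]
    linarith
  have hzM : 0 ≤ z * M := by positivity
  nlinarith

lemma isLeast_range_mul_abs_rpow_add_mul_abs_one_sub_rpow {a b t z : ℝ} (ha : 0 ≤ a)
    (hb : 0 ≤ b) (ht₀ : 0 < t) (ht₁ : t < 1) (hz : 1 ≤ z)
    (hbal : a * t ^ (z - 1) = b * (1 - t) ^ (z - 1)) :
    IsLeast (Set.range fun x : ℝ => a * |x| ^ z + b * |1 - x| ^ z) (a * t ^ (z - 1)) := by
  have hs : 0 < 1 - t := sub_pos.2 ht₁
  have hts : t + (1 - t) = 1 := add_sub_cancel t 1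
  have hvalue := mul_rpow_add_mul_rpow_eq_of_balanced ht₀ hs hts hbal
  refine ⟨⟨t, ?_⟩, ?_⟩
  · simpa only [abs_of_pos ht₀, abs_of_pos hs] using hvalue
  · rintro _ ⟨x, rfl⟩
    have hsum : 1 ≤ |x| + |1 - x| := by simpa using abs_add_le x (1 - x)
    rw [← hvalue]
    exact mul_rpow_add_mul_rpow_le_of_balanced ha hb ht₀ hs hts hz hbal
      (abs_nonneg x) (abs_nonneg (1 - x)) hsum

lemma rpow_inv_div_rpow {b S p : ℝ} (hb : 0 ≤ b) (hS : 0 < S) (hp : p ≠ 0) :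
    (b ^ p⁻¹ / S) ^ p = b / S ^ p := by
  rw [div_rpow (rpow_nonneg hb _) hS.le, rpow_inv_rpow hb hp]

theorem stmt16 (a n z : ℝ) (ha : 0 < a) (han : a < n) (hz : 1 < z) :
    IsLeast (Set.range fun x : ℝ => a * |x| ^ z + (n - a) * |1 - x| ^ z)
      (a * (n - a) / ((n - a) ^ (z - 1)⁻¹ + a ^ (z - 1)⁻¹) ^ (z - 1)) := by
  have hb : 0 < n - a := sub_pos.2 han
  have hp : z - 1 ≠ 0 := (sub_pos.2 hz).ne'
  set A := a ^ (z - 1)⁻¹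
  set B := (n - a) ^ (z - 1)⁻¹
  have hA : 0 < A := rpow_pos_of_pos ha _
  have hB : 0 < B := rpow_pos_of_pos hb _
  have hS : 0 < B + A := add_pos hB hA
  have hone_sub : 1 - B / (B + A) = A / (B + A) := by field_simp; ring
  have hvalue : a * (B / (B + A)) ^ (z - 1) = a * (n - a) / (B + A) ^ (z - 1) := by
    rw [rpow_inv_div_rpow hb.le hS hp, mul_div_assoc]
  have hbal : a * (B / (B + A)) ^ (z - 1) = (n - a) * (1 - B / (B + A)) ^ (z - 1) := by
    rw [hvalue, hone_sub, rpow_inv_div_rpow ha.le hS hp, mul_div_assoc', mul_comm]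
  rw [← hvalue]
  exact isLeast_range_mul_abs_rpow_add_mul_abs_one_sub_rpow ha.le hb.le (div_pos hB hS)
    ((div_lt_one hS).2 (lt_add_of_pos_right B hA)) hz.le hbal
end
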